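/- arXiv:2504.08162 — 6 statements merged into one kernel-verified Lean document; each statement's English description precedes it below -/
import Mathlib

section
/- Let s₁, s₂ : [0,T] → ℝ be differentiable functions solving the slow-down system, i.e. s₁'(t) = L·s₁(t)·(s₁(t)² + s₂(t)²)^α and s₂'(t) = −L·s₂(t)·(s₁(t)² + s₂(t)²)^α for all t ∈ [0,T], with s₁(t) > 0 and s₂(t) > 0 for all t ∈ [0,T]. Then for all 0 ≤ a ≤ t ≤ T one has s₂(t) ≤ s₂(a)·(1 + C₀·s₂(a)^{2α}·(t−a))^{−1/(2α)}. -/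
/-!
With `β = 2α`, the quantity `s₂ ^ (-β)` has derivative `β L (s₁² + s₂²)^α / s₂^β` along the
flow, and `(s₁² + s₂²)^α ≥ s₂^β` bounds this below by `β L = C₀`. Hence `s₂ ^ (-β)` grows at
least linearly, `s₂(a)^(-β) + C₀ (t - a) ≤ s₂(t)^(-β)`, and raising both sides to the power
`-1/β` gives the bound.
-/

open Real Set

theorem hasDerivAt_rpow_neg_of_hasDerivAt_neg_mul {s : ℝ → ℝ} {L w β t : ℝ}
    (hs : HasDerivAt s (-(L * s t * w)) t) (hpos : 0 < s t) :
    HasDerivAt (fun u => s u ^ (-β)) (β * L * (w / s t ^ β)) t := by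
  refine (hs.rpow_const (p := -β) (Or.inl hpos.ne')).congr_deriv ?_
  rw [rpow_sub_one hpos.ne', rpow_neg hpos.le]
  field_simp

theorem rpow_two_mul_le_sq_add_sq_rpow {x y α : ℝ} (hy : 0 ≤ y) (hα : 0 ≤ α) :
    y ^ (2 * α) ≤ (x ^ 2 + y ^ 2) ^ α := by
  rw [rpow_mul hy, rpow_two]
  exact rpow_le_rpow (by positivity) (by nlinarith [sq_nonneg x]) hα

theorem slowdown_rpow_neg_add_mul_le {L α a b : ℝ} {s₁ s₂ : ℝ → ℝ} (hL : 0 ≤ L) (hα : 0 < α)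
    (hab : a ≤ b)
    (hs₂ : ∀ t ∈ Icc a b, HasDerivAt s₂ (-(L * s₂ t * (s₁ t ^ 2 + s₂ t ^ 2) ^ α)) t)
    (hpos : ∀ t ∈ Icc a b, 0 < s₂ t) :
    s₂ a ^ (-(2 * α)) + 2 * α * L * (b - a) ≤ s₂ b ^ (-(2 * α)) := by
  have hderiv : ∀ t ∈ Icc a b, HasDerivAt (fun u => s₂ u ^ (-(2 * α)))
      (2 * α * L * ((s₁ t ^ 2 + s₂ t ^ 2) ^ α / s₂ t ^ (2 * α))) t := fun t ht =>
    hasDerivAt_rpow_neg_of_hasDerivAt_neg_mul (hs₂ t ht) (hpos t ht)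
  have hderiv_ge : ∀ t ∈ interior (Icc a b),
      2 * α * L ≤ deriv (fun u => s₂ u ^ (-(2 * α))) t := by
    intro t ht
    have ht := interior_subset ht
    rw [(hderiv t ht).deriv]
    refine le_mul_of_one_le_right (by positivity) ((one_le_div (rpow_pos_of_pos (hpos t ht) _)).2 ?_)
    exact rpow_two_mul_le_sq_add_sq_rpow (hpos t ht).le hα.le
  have := (convex_Icc a b).mul_sub_le_image_sub_of_le_deriv
    (fun t ht => (hderiv t ht).continuousAt.continuousWithinAt)
    (fun t ht => (hderiv t (interior_subset ht)).differentiableAt.differentiableWithinAt)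
    hderiv_ge a (left_mem_Icc.2 hab) b (right_mem_Icc.2 hab) hab
  linarith

theorem le_mul_one_add_rpow_of_rpow_neg_add_le {x y c β : ℝ} (hx : 0 < x) (hy : 0 < y)
    (hβ : 0 < β) (hc : 0 ≤ c) (h : x ^ (-β) + c ≤ y ^ (-β)) :
    y ≤ x * (1 + c * x ^ β) ^ (-(1 / β)) := by
  have hinv : ∀ z : ℝ, 0 ≤ z → (z ^ (-β)) ^ (-(1 / β)) = z := fun z hz => by
    rw [← rpow_mul hz, neg_mul_neg, mul_one_div_cancel hβ.ne', rpow_one]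
  have hfactor : x ^ (-β) + c = x ^ (-β) * (1 + c * x ^ β) := by
    rw [rpow_neg hx.le]
    field_simp
  calc y = (y ^ (-β)) ^ (-(1 / β)) := (hinv y hy.le).symm
    _ ≤ (x ^ (-β) + c) ^ (-(1 / β)) :=
      rpow_le_rpow_of_nonpos (by positivity) h (by simp [hβ.le])
    _ = x * (1 + c * x ^ β) ^ (-(1 / β)) := by
      rw [hfactor, mul_rpow (by positivity) (by positivity), hinv x hx.le]

theorem slowdown_s2_upper_bound_general
    (lam α : ℝ) (hlam : 1 < lam) (hα : α ∈ Set.Ioo (0 : ℝ) 1)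
    (p : ℤ) (hp : 3 ≤ p)
    (L C₀ : ℝ)
    (hL : L = Real.log lam * ((p : ℝ) / 2) ^ (2 * α))
    (hC₀ : C₀ = 2 * α * L)
    (T : ℝ) (s₁ s₂ : ℝ → ℝ)
    (hs₂ : ∀ t ∈ Set.Icc (0 : ℝ) T,
      HasDerivAt s₂ (-(L * s₂ t * (s₁ t ^ 2 + s₂ t ^ 2) ^ α)) t)
    (hpos₂ : ∀ t ∈ Set.Icc (0 : ℝ) T, 0 < s₂ t)
    (a t : ℝ) (ha : 0 ≤ a) (hat : a ≤ t) (htT : t ≤ T) :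
    s₂ t ≤ s₂ a * (1 + C₀ * s₂ a ^ (2 * α) * (t - a)) ^ (-(1 / (2 * α))) := by
  have hα0 : 0 < α := hα.1
  have hp0 : (0 : ℝ) ≤ (p : ℝ) / 2 := by
    have : (3 : ℝ) ≤ p := by exact_mod_cast hp
    linarith
  have hL0 : 0 ≤ L := hL ▸ mul_nonneg (log_nonneg hlam.le) (rpow_nonneg hp0 _)
  have hC₀0 : 0 ≤ C₀ := hC₀ ▸ by positivity
  have hsub : Icc a t ⊆ Icc 0 T := Icc_subset_Icc ha htT
  have hgrowth := slowdown_rpow_neg_add_mul_le hL0 hα0 hat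
    (fun u hu => hs₂ u (hsub hu)) (fun u hu => hpos₂ u (hsub hu))
  rw [← hC₀] at hgrowth
  rw [mul_right_comm]
  exact le_mul_one_add_rpow_of_rpow_neg_add_le (hpos₂ a (hsub (left_mem_Icc.2 hat)))
    (hpos₂ t (hsub (right_mem_Icc.2 hat))) (by positivity)
    (mul_nonneg hC₀0 (sub_nonneg.2 hat)) hgrowth

/-- Lemma "s1 and s2 approx" (b): upper bound on `s₂` along a solution of the
slow-down system `s₁' = L s₁ (s₁² + s₂²)^α`, `s₂' = -L s₂ (s₁² + s₂²)^α`,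
where `L = (log λ) (p/2)^{2α}` and `C₀ = 2 α L`. -/
theorem slowdown_s2_upper_bound
    (lam α : ℝ) (hlam : 1 < lam) (hα : α ∈ Set.Ioo (0 : ℝ) 1)
    (p : ℤ) (hp : 3 ≤ p)
    (L C₀ : ℝ)
    (hL : L = Real.log lam * ((p : ℝ) / 2) ^ (2 * α))
    (hC₀ : C₀ = 2 * α * L)
    (T : ℝ) (s₁ s₂ : ℝ → ℝ)
    (hs₁ : ∀ t ∈ Set.Icc (0 : ℝ) T,
      HasDerivAt s₁ (L * s₁ t * (s₁ t ^ 2 + s₂ t ^ 2) ^ α) t)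
    (hs₂ : ∀ t ∈ Set.Icc (0 : ℝ) T,
      HasDerivAt s₂ (-(L * s₂ t * (s₁ t ^ 2 + s₂ t ^ 2) ^ α)) t)
    (hpos₁ : ∀ t ∈ Set.Icc (0 : ℝ) T, 0 < s₁ t)
    (hpos₂ : ∀ t ∈ Set.Icc (0 : ℝ) T, 0 < s₂ t)
    (a t : ℝ) (ha : 0 ≤ a) (hat : a ≤ t) (htT : t ≤ T) :
    s₂ t ≤ s₂ a * (1 + C₀ * s₂ a ^ (2 * α) * (t - a)) ^ (-(1 / (2 * α))) :=
  slowdown_s2_upper_bound_general lam α hlam hα p hp L C₀ hL hC₀ T s₁ s₂ hs₂ hpos₂ a t ha hat htT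
end

section
/- Let s₁, s₂ : [0,T] → ℝ be differentiable functions solving the slow-down system, i.e. s₁'(t) = L·s₁(t)·(s₁(t)² + s₂(t)²)^α and s₂'(t) = −L·s₂(t)·(s₁(t)² + s₂(t)²)^α for all t ∈ [0,T], with s₁(t) > 0 and s₂(t) > 0 for all t ∈ [0,T]. Let 0 < T₁ ≤ T and suppose s₁(t) ≤ s₂(t) for all t ∈ [0,T₁]. Then for all 0 ≤ a ≤ t ≤ T₁ one has s₂(t) ≥ s₂(a)·(1 + 2^α·C₀·s₂(a)^{2α}·(t−a))^{−1/(2α)}. -/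
/-!
Since `0 < s₁ ≤ s₂`, the slow-down system gives the Bernoulli-type inequality
`-s₂' ≤ 2^α L s₂^(1 + 2α)`. The substitution `w = s₂^(-2α)` linearises it to
`w' ≤ 2α · 2^α L = 2^α C₀`, so `w` grows at most linearly by the mean value theorem,
and raising `w(t) ≤ w(a) + 2^α C₀ (t - a)` to the power `-1/(2α)` gives the bound.
-/

open Set Real

theorem HasDerivAt.rpow_neg_const {f : ℝ → ℝ} {f' x β : ℝ} (hf : HasDerivAt f f' x)
    (hx : 0 < f x) : HasDerivAt (fun s ↦ f s ^ (-β)) (β * f x ^ (-β) / f x * -f') x := by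
  convert hf.rpow_const (p := -β) (Or.inl hx.ne') using 1
  rw [rpow_sub hx, rpow_one]
  ring

section DifferentialInequality

variable {y y' : ℝ → ℝ} {a t β K : ℝ}

theorem rpow_neg_le_add_of_neg_deriv_le (hβ : 0 < β) (hat : a ≤ t)
    (hy : ∀ x ∈ Icc a t, HasDerivAt y (y' x) x) (hpos : ∀ x ∈ Icc a t, 0 < y x)
    (hbound : ∀ x ∈ Icc a t, -y' x ≤ K * y x ^ (1 + β)) :
    y t ^ (-β) ≤ y a ^ (-β) + β * K * (t - a) := by
  have hw : ∀ x ∈ Icc a t, HasDerivAt (fun s ↦ y s ^ (-β)) (β * y x ^ (-β) / y x * -y' x) x :=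
    fun x hx ↦ (hy x hx).rpow_neg_const (hpos x hx)
  have hw' : ∀ x ∈ interior (Icc a t), deriv (fun s ↦ y s ^ (-β)) x ≤ β * K := by
    intro x hx
    have hx' := interior_subset hx
    have hyx := hpos x hx'
    rw [(hw x hx').deriv]
    calc β * y x ^ (-β) / y x * -y' x ≤ β * y x ^ (-β) / y x * (K * y x ^ (1 + β)) := by
          gcongr
          exact hbound x hx'
      _ = β * K * (y x ^ (-β) * y x ^ (1 + β) / y x) := by ring
      _ = β * K := by
        rw [← rpow_add hyx, add_comm 1 β, neg_add_cancel_left, rpow_one, div_self hyx.ne',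
          mul_one]
  have := (convex_Icc a t).image_sub_le_mul_sub_of_deriv_le
    (fun x hx ↦ (hw x hx).continuousAt.continuousWithinAt)
    (fun x hx ↦ (hw x (interior_subset hx)).differentiableAt.differentiableWithinAt)
    hw' a (left_mem_Icc.2 hat) t (right_mem_Icc.2 hat) hat
  linarith

theorem mul_one_add_mul_rpow_rpow_neg_inv {x c : ℝ} (hx : 0 < x) (hβ : β ≠ 0)
    (hc : 0 ≤ 1 + c * x ^ β) :
    x * (1 + c * x ^ β) ^ (-(1 / β)) = (x ^ (-β) + c) ^ (-(1 / β)) := by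
  have hfactor : x ^ (-β) + c = x ^ (-β) * (1 + c * x ^ β) := by
    rw [mul_add, mul_one, mul_left_comm, ← rpow_add hx, neg_add_cancel, rpow_zero, mul_one]
  rw [hfactor, mul_rpow (by positivity) hc, ← rpow_mul hx.le, neg_mul_neg, mul_one_div_cancel hβ,
    rpow_one]

theorem le_of_neg_deriv_le_mul_rpow (hβ : 0 < β) (hat : a ≤ t)
    (hy : ∀ x ∈ Icc a t, HasDerivAt y (y' x) x) (hpos : ∀ x ∈ Icc a t, 0 < y x)
    (hbound : ∀ x ∈ Icc a t, -y' x ≤ K * y x ^ (1 + β)) :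
    y a * (1 + β * K * y a ^ β * (t - a)) ^ (-(1 / β)) ≤ y t := by
  have hya := hpos a (left_mem_Icc.2 hat)
  have hyt := hpos t (right_mem_Icc.2 hat)
  have hcmp := rpow_neg_le_add_of_neg_deriv_le hβ hat hy hpos hbound
  have hsum : 0 < y a ^ (-β) + β * K * (t - a) := (rpow_pos_of_pos hyt _).trans_le hcmp
  have hbase : 0 ≤ 1 + β * K * (t - a) * y a ^ β := by
    have := mul_pos hsum (rpow_pos_of_pos hya β)
    rw [add_mul, ← rpow_add hya, neg_add_cancel, rpow_zero] at this
    linarith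
  rw [mul_right_comm, mul_one_add_mul_rpow_rpow_neg_inv hya hβ.ne' hbase, one_div, neg_inv,
    rpow_inv_le_iff_of_neg hsum hyt (neg_neg_of_pos hβ)]
  exact hcmp

end DifferentialInequality

theorem rpow_sq_add_sq_le {u v α : ℝ} (hu : 0 ≤ u) (huv : u ≤ v) (hα : 0 ≤ α) :
    (u ^ 2 + v ^ 2) ^ α ≤ 2 ^ α * v ^ (2 * α) := by
  have hv : 0 ≤ v := hu.trans huv
  calc (u ^ 2 + v ^ 2) ^ α ≤ (2 * v ^ 2) ^ α := by gcongr; nlinarith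
    _ = 2 ^ α * v ^ (2 * α) := by
      rw [mul_rpow zero_le_two (by positivity), rpow_mul hv, rpow_two]

theorem mul_mul_rpow_sq_add_sq_le {L u v α : ℝ} (hL : 0 ≤ L) (hu : 0 ≤ u) (huv : u ≤ v)
    (hα : 0 ≤ α) : L * v * (u ^ 2 + v ^ 2) ^ α ≤ 2 ^ α * L * v ^ (1 + 2 * α) := by
  have hv : 0 ≤ v := hu.trans huv
  calc L * v * (u ^ 2 + v ^ 2) ^ α ≤ L * v * (2 ^ α * v ^ (2 * α)) := by
        gcongr
        exact rpow_sq_add_sq_le hu huv hα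
    _ = 2 ^ α * L * v ^ (1 + 2 * α) := by
      rw [rpow_add' hv (by positivity), rpow_one]
      ring

theorem slowdown_s2_lower_bound_general
    (lam α : ℝ) (hlam : 1 < lam) (hα : α ∈ Set.Ioo (0 : ℝ) 1)
    (p : ℤ) (hp : 3 ≤ p)
    (L C₀ : ℝ)
    (hL : L = Real.log lam * ((p : ℝ) / 2) ^ (2 * α))
    (hC₀ : C₀ = 2 * α * L)
    (T : ℝ) (s₁ s₂ : ℝ → ℝ)
    (hs₂ : ∀ t ∈ Set.Icc (0 : ℝ) T,
      HasDerivAt s₂ (-(L * s₂ t * (s₁ t ^ 2 + s₂ t ^ 2) ^ α)) t)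
    (hpos₁ : ∀ t ∈ Set.Icc (0 : ℝ) T, 0 < s₁ t)
    (hpos₂ : ∀ t ∈ Set.Icc (0 : ℝ) T, 0 < s₂ t)
    (T₁ : ℝ) (hT₁T : T₁ ≤ T)
    (horder : ∀ t ∈ Set.Icc (0 : ℝ) T₁, s₁ t ≤ s₂ t)
    (a t : ℝ) (ha : 0 ≤ a) (hat : a ≤ t) (htT₁ : t ≤ T₁) :
    s₂ a * (1 + 2 ^ α * C₀ * s₂ a ^ (2 * α) * (t - a)) ^ (-(1 / (2 * α))) ≤ s₂ t := by
  obtain ⟨hα₀, -⟩ := hα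
  have hp₀ : (0 : ℝ) < p := by exact_mod_cast (by omega : (0 : ℤ) < p)
  have hL₀ : 0 ≤ L := hL ▸ (mul_pos (log_pos hlam) (by positivity)).le
  have hsub₁ : Icc a t ⊆ Icc 0 T₁ := Icc_subset_Icc ha htT₁
  have hsub : Icc a t ⊆ Icc 0 T := hsub₁.trans (Icc_subset_Icc_right hT₁T)
  have hbound := le_of_neg_deriv_le_mul_rpow (β := 2 * α) (K := 2 ^ α * L) (by positivity) hat
    (fun x hx ↦ hs₂ x (hsub hx)) (fun x hx ↦ hpos₂ x (hsub hx)) fun x hx ↦ by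
      rw [neg_neg]
      exact mul_mul_rpow_sq_add_sq_le hL₀ (hpos₁ x (hsub hx)).le (horder x (hsub₁ hx)) hα₀.le
  convert hbound using 5
  rw [hC₀]
  ring

/-- Lemma "s1 and s2 approx" (a): lower bound on `s₂` along a solution of the
slow-down system `s₁' = L s₁ (s₁² + s₂²)^α`, `s₂' = -L s₂ (s₁² + s₂²)^α`,
where `L = (log λ) (p/2)^{2α}` and `C₀ = 2 α L`, on an interval `[0, T₁]`
where `s₁ ≤ s₂`. -/
theorem slowdown_s2_lower_bound
    (lam α : ℝ) (hlam : 1 < lam) (hα : α ∈ Set.Ioo (0 : ℝ) 1)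
    (p : ℤ) (hp : 3 ≤ p)
    (L C₀ : ℝ)
    (hL : L = Real.log lam * ((p : ℝ) / 2) ^ (2 * α))
    (hC₀ : C₀ = 2 * α * L)
    (T : ℝ) (s₁ s₂ : ℝ → ℝ)
    (hs₁ : ∀ t ∈ Set.Icc (0 : ℝ) T,
      HasDerivAt s₁ (L * s₁ t * (s₁ t ^ 2 + s₂ t ^ 2) ^ α) t)
    (hs₂ : ∀ t ∈ Set.Icc (0 : ℝ) T,
      HasDerivAt s₂ (-(L * s₂ t * (s₁ t ^ 2 + s₂ t ^ 2) ^ α)) t)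
    (hpos₁ : ∀ t ∈ Set.Icc (0 : ℝ) T, 0 < s₁ t)
    (hpos₂ : ∀ t ∈ Set.Icc (0 : ℝ) T, 0 < s₂ t)
    (T₁ : ℝ) (hT₁pos : 0 < T₁) (hT₁T : T₁ ≤ T)
    (horder : ∀ t ∈ Set.Icc (0 : ℝ) T₁, s₁ t ≤ s₂ t)
    (a t : ℝ) (ha : 0 ≤ a) (hat : a ≤ t) (htT₁ : t ≤ T₁) :
    s₂ a * (1 + 2 ^ α * C₀ * s₂ a ^ (2 * α) * (t - a)) ^ (-(1 / (2 * α))) ≤ s₂ t :=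
  slowdown_s2_lower_bound_general lam α hlam hα p hp L C₀ hL hC₀ T s₁ s₂ hs₂ hpos₁ hpos₂ T₁ hT₁T
    horder a t ha hat htT₁
end

section
/- Let s₁, s₂ : [0,T] → ℝ be differentiable functions solving the slow-down system, i.e. s₁'(t) = L·s₁(t)·(s₁(t)² + s₂(t)²)^α and s₂'(t) = −L·s₂(t)·(s₁(t)² + s₂(t)²)^α for all t ∈ [0,T], with s₁(t) > 0 and s₂(t) > 0 for all t ∈ [0,T]. Let 0 ≤ T₁ ≤ T and suppose s₂(t) ≤ s₁(t) for all t ∈ [T₁,T]. Then for all T₁ ≤ t ≤ b ≤ T one has s₁(t) ≥ s₁(b)·(1 + 2^α·C₀·s₁(b)^{2α}·(b−t))^{−1/(2α)}. -/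
/-- Lemma "s1 and s2 approx" (c): lower bound on `s₁` along a solution of the
slow-down system `s₁' = L s₁ (s₁² + s₂²)^α`, `s₂' = -L s₂ (s₁² + s₂²)^α`,
where `L = (log λ) (p/2)^{2α}` and `C₀ = 2 α L`, on an interval `[T₁, T]`
where `s₂ ≤ s₁`. -/
theorem slowdown_s1_lower_bound
    (lam α : ℝ) (hlam : 1 < lam) (hα : α ∈ Set.Ioo (0 : ℝ) 1)
    (p : ℤ) (hp : 3 ≤ p)
    (L C₀ : ℝ)
    (hL : L = Real.log lam * ((p : ℝ) / 2) ^ (2 * α))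
    (hC₀ : C₀ = 2 * α * L)
    (T : ℝ) (s₁ s₂ : ℝ → ℝ)
    (hs₁ : ∀ t ∈ Set.Icc (0 : ℝ) T,
      HasDerivAt s₁ (L * s₁ t * (s₁ t ^ 2 + s₂ t ^ 2) ^ α) t)
    (hs₂ : ∀ t ∈ Set.Icc (0 : ℝ) T,
      HasDerivAt s₂ (-(L * s₂ t * (s₁ t ^ 2 + s₂ t ^ 2) ^ α)) t)
    (hpos₁ : ∀ t ∈ Set.Icc (0 : ℝ) T, 0 < s₁ t)
    (hpos₂ : ∀ t ∈ Set.Icc (0 : ℝ) T, 0 < s₂ t)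
    (T₁ : ℝ) (hT₁pos : 0 ≤ T₁) (hT₁T : T₁ ≤ T)
    (horder : ∀ t ∈ Set.Icc T₁ T, s₂ t ≤ s₁ t)
    (t b : ℝ) (hT₁t : T₁ ≤ t) (htb : t ≤ b) (hbT : b ≤ T) :
    s₁ b * (1 + 2 ^ α * C₀ * s₁ b ^ (2 * α) * (b - t)) ^ (-(1 / (2 * α))) ≤ s₁ t := by
  obtain ⟨hα0, hα1⟩ := hα
  have hp2 : (0 : ℝ) < (p : ℝ) / 2 := by
    have : (3 : ℝ) ≤ (p : ℝ) := by exact_mod_cast hp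
    linarith
  have hL0 : 0 < L := by
    rw [hL]
    exact mul_pos (Real.log_pos hlam) (Real.rpow_pos_of_pos hp2 _)
  have hC₀0 : 0 < C₀ := by rw [hC₀]; positivity
  set C : ℝ := 2 ^ α * C₀ with hCdef
  have hC0 : 0 < C := by positivity
  -- membership helpers
  have hmem0 : ∀ x ∈ Set.Icc t b, x ∈ Set.Icc (0 : ℝ) T := fun x hx =>
    ⟨le_trans (le_trans hT₁pos hT₁t) hx.1, le_trans hx.2 hbT⟩
  have hmem1 : ∀ x ∈ Set.Icc t b, x ∈ Set.Icc T₁ T := fun x hx =>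
    ⟨le_trans hT₁t hx.1, le_trans hx.2 hbT⟩
  have htmem : t ∈ Set.Icc t b := ⟨le_refl _, htb⟩
  have hbmem : b ∈ Set.Icc t b := ⟨htb, le_refl _⟩
  -- g y = s₁ y ^ (-(2α))
  set g : ℝ → ℝ := fun y => s₁ y ^ (-(2 * α)) with hgdef
  set g' : ℝ → ℝ := fun x =>
    (L * s₁ x * (s₁ x ^ 2 + s₂ x ^ 2) ^ α) * (-(2 * α)) * s₁ x ^ (-(2 * α) - 1) with hg'def
  have hg : ∀ x ∈ Set.Icc t b, HasDerivWithinAt g (g' x) (Set.Icc t b) x := by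
    intro x hx
    exact ((hs₁ x (hmem0 x hx)).rpow_const
      (Or.inl (hpos₁ x (hmem0 x hx)).ne')).hasDerivWithinAt
  have hbound : ∀ x ∈ Set.Icc t b, ‖g' x‖ ≤ C := by
    intro x hx
    have h1 : 0 < s₁ x := hpos₁ x (hmem0 x hx)
    have h2 : 0 < s₂ x := hpos₂ x (hmem0 x hx)
    have hord : s₂ x ≤ s₁ x := horder x (hmem1 x hx)
    have hsum : s₁ x ^ 2 + s₂ x ^ 2 ≤ 2 * s₁ x ^ 2 := by nlinarith
    have hsumpos : (0 : ℝ) < s₁ x ^ 2 + s₂ x ^ 2 := by positivity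
    have hstep : (s₁ x ^ 2 + s₂ x ^ 2) ^ α ≤ (2 * s₁ x ^ 2) ^ α :=
      Real.rpow_le_rpow hsumpos.le hsum hα0.le
    have hpow2 : (s₁ x ^ 2 : ℝ) ^ α = s₁ x ^ (2 * α) := by
      rw [← Real.rpow_natCast (s₁ x) 2, ← Real.rpow_mul h1.le]
      norm_num
    have hmulrpow : (2 * s₁ x ^ 2 : ℝ) ^ α = 2 ^ α * s₁ x ^ (2 * α) := by
      rw [Real.mul_rpow (by norm_num) (by positivity), hpow2]
    have hcombine : s₁ x * s₁ x ^ (-(2 * α) - 1) = s₁ x ^ (-(2 * α)) := by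
      nth_rewrite 1 [← Real.rpow_one (s₁ x)]
      rw [← Real.rpow_add h1]
      ring_nf
    have hcancel : s₁ x ^ (2 * α) * s₁ x ^ (-(2 * α)) = 1 := by
      rw [← Real.rpow_add h1]
      simp
    have hgx : g' x = -(2 * α * L * ((s₁ x ^ 2 + s₂ x ^ 2) ^ α * s₁ x ^ (-(2 * α)))) := by
      have h0 : g' x
          = L * s₁ x * (s₁ x ^ 2 + s₂ x ^ 2) ^ α * -(2 * α) * s₁ x ^ (-(2 * α) - 1) := rfl
      rw [h0, show L * s₁ x * (s₁ x ^ 2 + s₂ x ^ 2) ^ α * -(2 * α) * s₁ x ^ (-(2 * α) - 1)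
          = -(2 * α * L * ((s₁ x ^ 2 + s₂ x ^ 2) ^ α * (s₁ x * s₁ x ^ (-(2 * α) - 1)))) by ring,
        hcombine]
    rw [hgx, norm_neg, Real.norm_of_nonneg (by positivity)]
    have : (s₁ x ^ 2 + s₂ x ^ 2) ^ α * s₁ x ^ (-(2 * α)) ≤ 2 ^ α := by
      calc (s₁ x ^ 2 + s₂ x ^ 2) ^ α * s₁ x ^ (-(2 * α))
          ≤ (2 * s₁ x ^ 2) ^ α * s₁ x ^ (-(2 * α)) := by
            apply mul_le_mul_of_nonneg_right hstep (Real.rpow_nonneg h1.le _)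
        _ = 2 ^ α * (s₁ x ^ (2 * α) * s₁ x ^ (-(2 * α))) := by rw [hmulrpow]; ring
        _ = 2 ^ α := by rw [hcancel, mul_one]
    calc 2 * α * L * ((s₁ x ^ 2 + s₂ x ^ 2) ^ α * s₁ x ^ (-(2 * α)))
        ≤ 2 * α * L * 2 ^ α := by
          apply mul_le_mul_of_nonneg_left this (by positivity)
      _ = C := by rw [hCdef, hC₀]; ring
  have hmvt := (convex_Icc t b).norm_image_sub_le_of_norm_hasDerivWithin_le hg hbound htmem hbmem
  rw [Real.norm_eq_abs, Real.norm_eq_abs,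
    abs_of_nonneg (show (0:ℝ) ≤ b - t by linarith)] at hmvt
  have hmain : g t ≤ g b + C * (b - t) := by
    obtain ⟨h1, h2⟩ := abs_le.mp hmvt
    linarith
  -- positivity facts
  have hbpos : 0 < s₁ b := hpos₁ b (hmem0 b hbmem)
  have htpos : 0 < s₁ t := hpos₁ t (hmem0 t htmem)
  have hB : 0 < 1 + C * s₁ b ^ (2 * α) * (b - t) := by
    have : 0 ≤ C * s₁ b ^ (2 * α) * (b - t) := by
      apply mul_nonneg (by positivity); linarith
    linarith
  -- rewrite g b + C(b-t) as s₁ b ^ (-(2α)) * B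
  have hgb : g b + C * (b - t) = s₁ b ^ (-(2 * α)) * (1 + C * s₁ b ^ (2 * α) * (b - t)) := by
    have hc : s₁ b ^ (-(2 * α)) * s₁ b ^ (2 * α) = 1 := by
      rw [← Real.rpow_add hbpos]; simp
    rw [hgdef]
    simp only []
    rw [mul_add, mul_one]
    rw [show s₁ b ^ (-(2 * α)) * (C * s₁ b ^ (2 * α) * (b - t))
        = (s₁ b ^ (-(2 * α)) * s₁ b ^ (2 * α)) * (C * (b - t)) by ring, hc, one_mul]
  rw [hgb] at hmain
  have hgtpos : 0 < g t := Real.rpow_pos_of_pos htpos _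
  -- apply antitone rpow with exponent -(1/(2α))
  have hexp : -(1 / (2 * α)) ≤ 0 := by
    have : (0:ℝ) < 1 / (2 * α) := by positivity
    linarith
  have hfinal := Real.rpow_le_rpow_of_nonpos hgtpos hmain hexp
  have hone : (-(2 * α)) * (-(1 / (2 * α))) = 1 := by field_simp
  have hst : (g t) ^ (-(1 / (2 * α))) = s₁ t := by
    rw [hgdef]
    simp only []
    rw [← Real.rpow_mul htpos.le, hone, Real.rpow_one]
  have hrhs : (s₁ b ^ (-(2 * α)) * (1 + C * s₁ b ^ (2 * α) * (b - t))) ^ (-(1 / (2 * α)))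
      = s₁ b * (1 + C * s₁ b ^ (2 * α) * (b - t)) ^ (-(1 / (2 * α))) := by
    rw [Real.mul_rpow (Real.rpow_nonneg hbpos.le _) hB.le,
      ← Real.rpow_mul hbpos.le, hone, Real.rpow_one]
  rw [hst, hrhs] at hfinal
  exact hfinal
end

section
/- Under the standing comparison assumptions for two solutions of the slow-down system on [0,T] with T₁ = T/2, setting β = (1−μ)/2^{α+2}, one has for all 0 ≤ t ≤ T₁: Δs₂(t) ≤ (Δs₂(0)/s₂(0))·s₂(t)·(1 + 2^α·C₀·s₂(0)^{2α}·t)^{−β}. -/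
/-!
On `[0, T/2]` the relative spread `r = Δs₂ / s₂` satisfies
`r' = -L s̃₂ ((s̃₁² + s̃₂²)^α - (s₁² + s₂²)^α) / s₂ ≤ 0`, so `r ≤ r(0) ≤ 1/72` and
`s̃₂² ≤ 2 s₂²`. Concavity of `x ↦ x^α` together with `|Δs₁| ≤ μ Δs₂` then sharpens this to
`r' ≤ -(α (1-μ) L / 2) s₂^{2α} r`. Since `s₁ ≤ s₂`, `(s₂^{-2α})' ≤ 2^α C₀`, i.e.
`s₂(0)^{2α} ≤ s₂(t)^{2α} (1 + K t)` with `K = 2^α C₀ s₂(0)^{2α}`. As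
`K β = α (1-μ) L s₂(0)^{2α} / 2`, this gives `r' (1 + K t) ≤ -K β r`, so `r(t) (1 + K t)^β`
is nonincreasing.
-/

open Set Real

lemma antitoneOn_Icc_of_hasDerivAt_nonpos {f f' : ℝ → ℝ} {a b : ℝ}
    (hf : ∀ x ∈ Icc a b, HasDerivAt f (f' x) x) (hf' : ∀ x ∈ Icc a b, f' x ≤ 0) :
    AntitoneOn f (Icc a b) :=
  antitoneOn_of_hasDerivWithinAt_nonpos (convex_Icc a b)
    (fun x hx => (hf x hx).continuousAt.continuousWithinAt)
    (fun x hx => (hf x (interior_subset hx)).hasDerivWithinAt)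
    (fun x hx => hf' x (interior_subset hx))

/-- Tangent-line bound for the concave function `x ↦ x ^ α`, multiplied through by `x`. -/
lemma mul_sub_mul_rpow_le_mul_rpow_sub_rpow {α x y : ℝ} (hα₀ : 0 ≤ α) (hα₁ : α ≤ 1)
    (hx : 0 < x) (hy : 0 ≤ y) : α * (x - y) * x ^ α ≤ x * (x ^ α - y ^ α) := by
  have hbern := rpow_one_add_le_one_add_mul_self (s := (y - x) / x)
    (by rw [le_div_iff₀ hx]; linarith) hα₀ hα₁
  rw [show 1 + (y - x) / x = y / x by field_simp; ring, div_rpow hy hx.le,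
    div_le_iff₀ (rpow_pos_of_pos hx α)] at hbern
  have : (1 + α * ((y - x) / x)) * x ^ α * x = x * x ^ α + α * (y - x) * x ^ α := by
    field_simp
  nlinarith

lemma one_sub_mul_add_mul_sub_le_sq_add_sq_sub {μ s₁ s₂ u₁ u₂ : ℝ} (hμ : μ ≤ 1)
    (hs : s₁ ≤ s₂) (hsum : 0 ≤ u₁ + s₁) (hd : 0 ≤ u₂ - s₂) (hΔ : |u₁ - s₁| ≤ μ * (u₂ - s₂)) :
    (1 - μ) * (u₂ + s₂) * (u₂ - s₂) ≤ (u₁ ^ 2 + u₂ ^ 2) - (s₁ ^ 2 + s₂ ^ 2) := by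
  obtain ⟨hΔl, hΔu⟩ := abs_le.1 hΔ
  have hμd : 0 ≤ μ * (u₂ - s₂) := (abs_nonneg _).trans hΔ
  have hμd' : μ * (u₂ - s₂) ≤ u₂ - s₂ := by nlinarith
  nlinarith [mul_le_mul_of_nonneg_left hΔl hsum]

lemma le_mul_sq_add_sq_rpow_sub_rpow {α μ s₁ s₂ u₁ u₂ : ℝ} (hα₀ : 0 ≤ α) (hα₁ : α ≤ 1) (hμ : μ ≤ 1)
    (hs₁ : 0 ≤ s₁) (hs : s₁ ≤ s₂) (hs₂ : 0 < s₂) (hu₁ : 0 ≤ u₁) (hd : s₂ ≤ u₂)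
    (hu₂ : u₂ ^ 2 ≤ 2 * s₂ ^ 2) (hΔ : |u₁ - s₁| ≤ μ * (u₂ - s₂)) :
    α * (1 - μ) / 2 * s₂ ^ (2 * α) * (u₂ - s₂) ≤
      u₂ * ((u₁ ^ 2 + u₂ ^ 2) ^ α - (s₁ ^ 2 + s₂ ^ 2) ^ α) := by
  set Ru := u₁ ^ 2 + u₂ ^ 2
  set Rs := s₁ ^ 2 + s₂ ^ 2
  have h1μ : 0 ≤ 1 - μ := by linarith
  have hd₀ : 0 ≤ u₂ - s₂ := by linarith
  have hR := one_sub_mul_add_mul_sub_le_sq_add_sq_sub hμ hs (by linarith) hd₀ hΔ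
  have hu₁₂ : u₁ ≤ u₂ := by linarith [(le_abs_self _).trans hΔ, mul_le_of_le_one_left hd₀ hμ]
  have hRu : Ru ≤ 4 * s₂ ^ 2 := by nlinarith
  have hRu₀ : 0 < Ru := by have := hs₂.trans_le hd; positivity
  have hs₂Ru : s₂ ^ (2 * α) ≤ Ru ^ α := by
    rw [rpow_mul hs₂.le, rpow_two]
    exact rpow_le_rpow (by positivity) (by nlinarith) hα₀
  have htangent := mul_sub_mul_rpow_le_mul_rpow_sub_rpow hα₀ hα₁ hRu₀ (by positivity : 0 ≤ Rs)
  have hαRu : 0 ≤ α * Ru ^ α := mul_nonneg hα₀ (rpow_nonneg hRu₀.le α)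
  refine le_of_mul_le_mul_right ?_ hRu₀
  calc α * (1 - μ) / 2 * s₂ ^ (2 * α) * (u₂ - s₂) * Ru
      ≤ α * (1 - μ) / 2 * Ru ^ α * (u₂ - s₂) * (4 * s₂ ^ 2) := by gcongr
    _ = α * Ru ^ α * ((1 - μ) * (2 * s₂) * (u₂ - s₂)) * s₂ := by ring
    _ ≤ α * Ru ^ α * ((1 - μ) * (u₂ + s₂) * (u₂ - s₂)) * u₂ := by
        gcongr
        · exact mul_nonneg hαRu (mul_nonneg (mul_nonneg h1μ (by linarith)) hd₀)
        · linarith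
    _ ≤ α * Ru ^ α * (Ru - Rs) * u₂ := by gcongr; linarith
    _ = u₂ * (α * (Ru - Rs) * Ru ^ α) := by ring
    _ ≤ u₂ * (Ru * (Ru ^ α - Rs ^ α)) := by gcongr; linarith
    _ = u₂ * (Ru ^ α - Rs ^ α) * Ru := by ring

lemma hasDerivAt_sub_div {u s : ℝ → ℝ} {c a b x : ℝ} (hu : HasDerivAt u (-(c * u x * a)) x)
    (hs : HasDerivAt s (-(c * s x * b)) x) (hsx : s x ≠ 0) :
    HasDerivAt (fun τ => (u τ - s τ) / s τ) (-(c * u x * (a - b)) / s x) x := by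
  refine ((hu.sub hs).div hs hsx).congr_deriv ?_
  simp only [Pi.sub_apply]
  field_simp
  ring

lemma rpow_le_rpow_mul_one_add_of_hasDerivAt {f f' : ℝ → ℝ} {γ M a : ℝ} (hγ : 0 ≤ γ)
    (hf : ∀ x ∈ Icc 0 a, HasDerivAt f (f' x) x) (hpos : ∀ x ∈ Icc 0 a, 0 < f x)
    (hf' : ∀ x ∈ Icc 0 a, -(M * f x * f x ^ γ) ≤ f' x) :
    ∀ x ∈ Icc 0 a, f 0 ^ γ ≤ f x ^ γ * (1 + γ * M * f 0 ^ γ * x) := by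
  have hanti : AntitoneOn (fun x => f x ^ (-γ) - γ * M * x) (Icc 0 a) := by
    refine antitoneOn_Icc_of_hasDerivAt_nonpos (fun x hx => ((hf x hx).rpow_const
      (Or.inl (hpos x hx).ne')).sub ((hasDerivAt_id x).const_mul (γ * M))) fun x hx => ?_
    have hfx := hpos x hx
    have hfγ : 0 < f x ^ γ := rpow_pos_of_pos hfx γ
    rw [rpow_sub_one hfx.ne', rpow_neg hfx.le]
    have := mul_le_mul_of_nonneg_left (hf' x hx) hγ
    field_simp
    nlinarith
  intro x hx
  have h0 : (0 : ℝ) ∈ Icc 0 a := ⟨le_rfl, hx.1.trans hx.2⟩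
  have hφ := hanti h0 hx hx.1
  simp only [mul_zero, sub_zero, rpow_neg (hpos x hx).le, rpow_neg (hpos 0 h0).le] at hφ
  have hA : 0 < f x ^ γ := rpow_pos_of_pos (hpos x hx) γ
  have hB : 0 < f 0 ^ γ := rpow_pos_of_pos (hpos 0 h0) γ
  have := mul_le_mul_of_nonneg_left hφ (mul_pos hA hB).le
  field_simp at this
  nlinarith

lemma le_mul_one_add_rpow_neg_of_hasDerivAt {g g' : ℝ → ℝ} {K β a : ℝ} (hK : 0 ≤ K)
    (hg : ∀ x ∈ Icc 0 a, HasDerivAt g (g' x) x)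
    (hg' : ∀ x ∈ Icc 0 a, K * β * g x ≤ -(g' x * (1 + K * x))) :
    ∀ x ∈ Icc 0 a, g x ≤ g 0 * (1 + K * x) ^ (-β) := by
  have hbase : ∀ x ∈ Icc 0 a, 0 < 1 + K * x := fun x hx => by nlinarith [hx.1]
  have hanti : AntitoneOn (fun x => g x * (1 + K * x) ^ β) (Icc 0 a) := by
    refine antitoneOn_Icc_of_hasDerivAt_nonpos (fun x hx => (hg x hx).mul
      ((((hasDerivAt_id x).const_mul K).const_add 1).rpow_const
        (Or.inl (hbase x hx).ne'))) fun x hx => ?_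
    have hP : 0 < (1 + K * x) ^ β := rpow_pos_of_pos (hbase x hx) β
    simp only [id, mul_one]
    have hB := hbase x hx
    rw [rpow_sub_one hB.ne', show g' x * (1 + K * x) ^ β + g x * (K * β * ((1 + K * x) ^ β /
      (1 + K * x))) = (1 + K * x) ^ β / (1 + K * x) * (g' x * (1 + K * x) + K * β * g x) by
        field_simp]
    exact mul_nonpos_of_nonneg_of_nonpos (div_nonneg hP.le hB.le) (by linarith [hg' x hx])
  intro x hx
  have h0 : (0 : ℝ) ∈ Icc 0 a := ⟨le_rfl, hx.1.trans hx.2⟩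
  have hF := hanti h0 hx hx.1
  simp only [mul_zero, add_zero, one_rpow, mul_one] at hF
  rwa [rpow_neg (hbase x hx).le, le_mul_inv_iff₀ (rpow_pos_of_pos (hbase x hx) β)]

lemma sq_add_sq_rpow_le {α s₁ s₂ : ℝ} (hα : 0 ≤ α) (hs₁ : 0 ≤ s₁) (hs : s₁ ≤ s₂) :
    (s₁ ^ 2 + s₂ ^ 2) ^ α ≤ 2 ^ α * s₂ ^ (2 * α) :=
  calc (s₁ ^ 2 + s₂ ^ 2) ^ α ≤ (2 * s₂ ^ 2) ^ α := rpow_le_rpow (by positivity) (by nlinarith) hα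
    _ = 2 ^ α * s₂ ^ (2 * α) := by
      rw [mul_rpow zero_le_two (sq_nonneg _), rpow_mul (hs₁.trans hs), rpow_two]

noncomputable def spreadRatio (s u : ℝ → ℝ) (t : ℝ) : ℝ := (u t - s t) / s t

/-- The standing comparison assumptions, restricted to an interval `[0, a]` on which `s₁ ≤ s₂`. -/
structure SlowdownComparison (L α μ a : ℝ) (s₁ s₂ u₁ u₂ : ℝ → ℝ) : Prop where
  L_nonneg : 0 ≤ L
  α_nonneg : 0 ≤ α
  α_le_one : α ≤ 1
  μ_le_one : μ ≤ 1
  hasDerivAt_s₂ : ∀ t ∈ Icc 0 a, HasDerivAt s₂ (-(L * s₂ t * (s₁ t ^ 2 + s₂ t ^ 2) ^ α)) t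
  hasDerivAt_u₂ : ∀ t ∈ Icc 0 a, HasDerivAt u₂ (-(L * u₂ t * (u₁ t ^ 2 + u₂ t ^ 2) ^ α)) t
  s₁_nonneg : ∀ t ∈ Icc 0 a, 0 ≤ s₁ t
  s₂_pos : ∀ t ∈ Icc 0 a, 0 < s₂ t
  u₁_nonneg : ∀ t ∈ Icc 0 a, 0 ≤ u₁ t
  s₁_le_s₂ : ∀ t ∈ Icc 0 a, s₁ t ≤ s₂ t
  s₂_lt_u₂ : ∀ t ∈ Icc 0 a, s₂ t < u₂ t
  abs_sub_le : ∀ t ∈ Icc 0 a, |u₁ t - s₁ t| ≤ μ * (u₂ t - s₂ t)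

namespace SlowdownComparison

variable {L α μ a t : ℝ} {s₁ s₂ u₁ u₂ : ℝ → ℝ}

lemma sq_add_sq_le (h : SlowdownComparison L α μ a s₁ s₂ u₁ u₂) (ht : t ∈ Icc 0 a) :
    s₁ t ^ 2 + s₂ t ^ 2 ≤ u₁ t ^ 2 + u₂ t ^ 2 := by
  have h₁ := h.s₁_nonneg t ht
  have h₂ := h.s₂_pos t ht
  have hd := h.s₂_lt_u₂ t ht
  have := one_sub_mul_add_mul_sub_le_sq_add_sq_sub h.μ_le_one (h.s₁_le_s₂ t ht)
    (by linarith [h.u₁_nonneg t ht]) (by linarith) (h.abs_sub_le t ht)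
  nlinarith [mul_nonneg (mul_nonneg (sub_nonneg.2 h.μ_le_one) (by linarith : 0 ≤ u₂ t + s₂ t))
    (by linarith : 0 ≤ u₂ t - s₂ t)]

lemma hasDerivAt_spreadRatio (h : SlowdownComparison L α μ a s₁ s₂ u₁ u₂) (ht : t ∈ Icc 0 a) :
    HasDerivAt (spreadRatio s₂ u₂)
      (-(L * u₂ t * ((u₁ t ^ 2 + u₂ t ^ 2) ^ α - (s₁ t ^ 2 + s₂ t ^ 2) ^ α)) / s₂ t) t :=
  hasDerivAt_sub_div (h.hasDerivAt_u₂ t ht) (h.hasDerivAt_s₂ t ht) (h.s₂_pos t ht).ne'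

lemma spreadRatio_antitoneOn (h : SlowdownComparison L α μ a s₁ s₂ u₁ u₂) :
    AntitoneOn (spreadRatio s₂ u₂) (Icc 0 a) :=
  antitoneOn_Icc_of_hasDerivAt_nonpos (fun _ ht => h.hasDerivAt_spreadRatio ht) fun t ht => by
    have hR := rpow_le_rpow (by positivity) (h.sq_add_sq_le ht) h.α_nonneg
    have hu₂ := (h.s₂_pos t ht).trans (h.s₂_lt_u₂ t ht)
    exact div_nonpos_of_nonpos_of_nonneg (neg_nonpos.2 (mul_nonneg
      (mul_nonneg h.L_nonneg hu₂.le) (sub_nonneg.2 hR))) (h.s₂_pos t ht).le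

lemma sq_le_two_mul_sq (h : SlowdownComparison L α μ a s₁ s₂ u₁ u₂)
    (h₀ : (1 + spreadRatio s₂ u₂ 0) ^ 2 ≤ 2) (ht : t ∈ Icc 0 a) : u₂ t ^ 2 ≤ 2 * s₂ t ^ 2 := by
  have hs₂ := h.s₂_pos t ht
  have hd := h.s₂_lt_u₂ t ht
  have hr := h.spreadRatio_antitoneOn ⟨le_rfl, ht.1.trans ht.2⟩ ht ht.1
  have hr' : u₂ t ≤ (1 + spreadRatio s₂ u₂ 0) * s₂ t := by
    rw [spreadRatio, div_le_iff₀ hs₂] at hr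
    linarith
  calc u₂ t ^ 2 ≤ ((1 + spreadRatio s₂ u₂ 0) * s₂ t) ^ 2 := by gcongr; linarith
    _ ≤ 2 * s₂ t ^ 2 := by rw [mul_pow]; gcongr

lemma rpow_le_rpow_mul_one_add (h : SlowdownComparison L α μ a s₁ s₂ u₁ u₂) (ht : t ∈ Icc 0 a) :
    s₂ 0 ^ (2 * α) ≤ s₂ t ^ (2 * α) * (1 + 2 ^ α * (2 * α * L) * s₂ 0 ^ (2 * α) * t) := by
  rw [← mul_left_comm (2 * α)]
  refine rpow_le_rpow_mul_one_add_of_hasDerivAt (by linarith [h.α_nonneg]) h.hasDerivAt_s₂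
    h.s₂_pos (fun x hx => ?_) t ht
  have := mul_le_mul_of_nonneg_left (sq_add_sq_rpow_le h.α_nonneg (h.s₁_nonneg x hx)
    (h.s₁_le_s₂ x hx)) (mul_nonneg h.L_nonneg (h.s₂_pos x hx).le)
  linarith

lemma spreadRatio_le (h : SlowdownComparison L α μ a s₁ s₂ u₁ u₂)
    (h₀ : (1 + spreadRatio s₂ u₂ 0) ^ 2 ≤ 2) (ht : t ∈ Icc 0 a) :
    spreadRatio s₂ u₂ t ≤ spreadRatio s₂ u₂ 0 *
      (1 + 2 ^ α * (2 * α * L) * s₂ 0 ^ (2 * α) * t) ^ (-((1 - μ) / 2 ^ (α + 2))) := by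
  have hα := h.α_nonneg
  have hL := h.L_nonneg
  set K := 2 ^ α * (2 * α * L) * s₂ 0 ^ (2 * α) with hK
  have hK₀ : 0 ≤ K := by
    have := (h.s₂_pos 0 ⟨le_rfl, ht.1.trans ht.2⟩).le
    positivity
  have hKβ : K * ((1 - μ) / 2 ^ (α + 2)) = α * (1 - μ) / 2 * L * s₂ 0 ^ (2 * α) := by
    rw [hK, rpow_add two_pos, rpow_two]
    field_simp
  refine le_mul_one_add_rpow_neg_of_hasDerivAt hK₀ (fun _ hx => h.hasDerivAt_spreadRatio hx)
    (fun x hx => ?_) t ht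
  set D := (u₁ x ^ 2 + u₂ x ^ 2) ^ α - (s₁ x ^ 2 + s₂ x ^ 2) ^ α
  have hs₂ := h.s₂_pos x hx
  have hd := h.s₂_lt_u₂ x hx
  have hspread : α * (1 - μ) / 2 * s₂ x ^ (2 * α) * (u₂ x - s₂ x) ≤ u₂ x * D :=
    le_mul_sq_add_sq_rpow_sub_rpow hα h.α_le_one h.μ_le_one (h.s₁_nonneg x hx) (h.s₁_le_s₂ x hx) hs₂
      (h.u₁_nonneg x hx) hd.le (h.sq_le_two_mul_sq h₀ hx) (h.abs_sub_le x hx)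
  have hc : 0 ≤ α * (1 - μ) / 2 * L * (u₂ x - s₂ x) :=
    mul_nonneg (mul_nonneg (div_nonneg (mul_nonneg hα (by linarith [h.μ_le_one])) zero_le_two)
      hL) (by linarith)
  have hmain : K * ((1 - μ) / 2 ^ (α + 2)) * (u₂ x - s₂ x) ≤ L * u₂ x * D * (1 + K * x) :=
    calc K * ((1 - μ) / 2 ^ (α + 2)) * (u₂ x - s₂ x)
        = α * (1 - μ) / 2 * L * (u₂ x - s₂ x) * s₂ 0 ^ (2 * α) := by rw [hKβ]; ring
      _ ≤ α * (1 - μ) / 2 * L * (u₂ x - s₂ x) * (s₂ x ^ (2 * α) * (1 + K * x)) :=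
        mul_le_mul_of_nonneg_left (h.rpow_le_rpow_mul_one_add hx) hc
      _ = L * (α * (1 - μ) / 2 * s₂ x ^ (2 * α) * (u₂ x - s₂ x)) * (1 + K * x) := by ring
      _ ≤ L * (u₂ x * D) * (1 + K * x) := by gcongr; nlinarith [hx.1]
      _ = L * u₂ x * D * (1 + K * x) := by ring
  calc K * ((1 - μ) / 2 ^ (α + 2)) * spreadRatio s₂ u₂ x
      = K * ((1 - μ) / 2 ^ (α + 2)) * (u₂ x - s₂ x) / s₂ x := by rw [spreadRatio]; ring
    _ ≤ L * u₂ x * D * (1 + K * x) / s₂ x := div_le_div_of_nonneg_right hmain hs₂.le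
    _ = -(-(L * u₂ x * D) / s₂ x * (1 + K * x)) := by ring

end SlowdownComparison

theorem spread_in_slowdown_first_general
    (lam α : ℝ) (hlam : 1 < lam) (hα : α ∈ Set.Ioo (0 : ℝ) 1)
    (p : ℤ) (hp : 3 ≤ p)
    (L C₀ : ℝ)
    (hL : L = Real.log lam * ((p : ℝ) / 2) ^ (2 * α))
    (hC₀ : C₀ = 2 * α * L)
    (T μ : ℝ) (hμ : μ ∈ Set.Ioo (0 : ℝ) 1)
    (s₁ s₂ u₁ u₂ : ℝ → ℝ)
    (hs₂ : ∀ t ∈ Set.Icc (0 : ℝ) T,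
      HasDerivAt s₂ (-(L * s₂ t * (s₁ t ^ 2 + s₂ t ^ 2) ^ α)) t)
    (hu₂ : ∀ t ∈ Set.Icc (0 : ℝ) T,
      HasDerivAt u₂ (-(L * u₂ t * (u₁ t ^ 2 + u₂ t ^ 2) ^ α)) t)
    (hpos : ∀ t ∈ Set.Icc (0 : ℝ) T,
      0 < s₁ t ∧ 0 < s₂ t ∧ 0 < u₁ t ∧ 0 < u₂ t)
    (horder₁ : ∀ t ∈ Set.Icc (0 : ℝ) (T / 2), s₁ t ≤ s₂ t)
    (hΔpos : ∀ t ∈ Set.Icc (0 : ℝ) T, 0 < u₂ t - s₂ t)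
    (hΔctrl : ∀ t ∈ Set.Icc (0 : ℝ) T, |u₁ t - s₁ t| ≤ μ * (u₂ t - s₂ t))
    (hinit : (u₂ 0 - s₂ 0) / s₂ 0 ≤ (1 - μ) / 72)
    (t : ℝ) (ht : 0 ≤ t) (ht₁ : t ≤ T / 2) :
    u₂ t - s₂ t ≤ ((u₂ 0 - s₂ 0) / s₂ 0) * s₂ t *
      (1 + 2 ^ α * C₀ * s₂ 0 ^ (2 * α) * t) ^ (-((1 - μ) / 2 ^ (α + 2))) := by
  subst hC₀
  have hI : Icc (0 : ℝ) (T / 2) ⊆ Icc 0 T := Icc_subset_Icc_right (by linarith)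
  have hp₀ : (0 : ℝ) ≤ p / 2 := div_nonneg (by exact_mod_cast (by omega : (0 : ℤ) ≤ p)) zero_le_two
  have h : SlowdownComparison L α μ (T / 2) s₁ s₂ u₁ u₂ :=
    { L_nonneg := hL ▸ mul_nonneg (log_nonneg hlam.le) (rpow_nonneg hp₀ _)
      α_nonneg := hα.1.le
      α_le_one := hα.2.le
      μ_le_one := hμ.2.le
      hasDerivAt_s₂ := fun x hx => hs₂ x (hI hx)
      hasDerivAt_u₂ := fun x hx => hu₂ x (hI hx)
      s₁_nonneg := fun x hx => (hpos x (hI hx)).1.le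
      s₂_pos := fun x hx => (hpos x (hI hx)).2.1
      u₁_nonneg := fun x hx => (hpos x (hI hx)).2.2.1.le
      s₁_le_s₂ := horder₁
      s₂_lt_u₂ := fun x hx => sub_pos.1 (hΔpos x (hI hx))
      abs_sub_le := fun x hx => hΔctrl x (hI hx) }
  have h0 : (0 : ℝ) ∈ Icc 0 T := hI ⟨le_rfl, ht.trans ht₁⟩
  have hr₀ : 0 < spreadRatio s₂ u₂ 0 := div_pos (hΔpos 0 h0) (hpos 0 h0).2.1
  have hr₁ : spreadRatio s₂ u₂ 0 ≤ 1 / 72 := hinit.trans (by linarith [hμ.1])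
  have hst := h.spreadRatio_le (by nlinarith) ⟨ht, ht₁⟩
  rw [spreadRatio, div_le_iff₀ (hpos t (hI ⟨ht, ht₁⟩)).2.1] at hst
  calc u₂ t - s₂ t ≤ _ := hst
    _ = _ := by rw [spreadRatio]; ring

/-- Lemma "spread-in-slowdown", first estimate: under the standing comparison
assumptions for two solutions `s = (s₁,s₂)` and `s̃ = (u₁,u₂)` of the slow-down
system on `[0,T]` with `T₁ = T/2` and `β = (1-μ)/2^{α+2}`, for `0 ≤ t ≤ T₁`,
`Δs₂(t) ≤ (Δs₂(0)/s₂(0)) s₂(t) (1 + 2^α C₀ s₂(0)^{2α} t)^{-β}`. -/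
theorem spread_in_slowdown_first
    (lam α : ℝ) (hlam : 1 < lam) (hα : α ∈ Set.Ioo (0 : ℝ) 1)
    (p : ℤ) (hp : 3 ≤ p)
    (L C₀ : ℝ)
    (hL : L = Real.log lam * ((p : ℝ) / 2) ^ (2 * α))
    (hC₀ : C₀ = 2 * α * L)
    (T μ : ℝ) (hT : 0 < T) (hμ : μ ∈ Set.Ioo (0 : ℝ) 1)
    (s₁ s₂ u₁ u₂ : ℝ → ℝ)
    (hs₁ : ∀ t ∈ Set.Icc (0 : ℝ) T,
      HasDerivAt s₁ (L * s₁ t * (s₁ t ^ 2 + s₂ t ^ 2) ^ α) t)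
    (hs₂ : ∀ t ∈ Set.Icc (0 : ℝ) T,
      HasDerivAt s₂ (-(L * s₂ t * (s₁ t ^ 2 + s₂ t ^ 2) ^ α)) t)
    (hu₁ : ∀ t ∈ Set.Icc (0 : ℝ) T,
      HasDerivAt u₁ (L * u₁ t * (u₁ t ^ 2 + u₂ t ^ 2) ^ α) t)
    (hu₂ : ∀ t ∈ Set.Icc (0 : ℝ) T,
      HasDerivAt u₂ (-(L * u₂ t * (u₁ t ^ 2 + u₂ t ^ 2) ^ α)) t)
    (hpos : ∀ t ∈ Set.Icc (0 : ℝ) T,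
      0 < s₁ t ∧ 0 < s₂ t ∧ 0 < u₁ t ∧ 0 < u₂ t)
    (horder₁ : ∀ t ∈ Set.Icc (0 : ℝ) (T / 2), s₁ t ≤ s₂ t)
    (horder₂ : ∀ t ∈ Set.Icc (T / 2) T, s₂ t ≤ s₁ t)
    (hΔpos : ∀ t ∈ Set.Icc (0 : ℝ) T, 0 < u₂ t - s₂ t)
    (hΔctrl : ∀ t ∈ Set.Icc (0 : ℝ) T, |u₁ t - s₁ t| ≤ μ * (u₂ t - s₂ t))
    (hinit : (u₂ 0 - s₂ 0) / s₂ 0 ≤ (1 - μ) / 72)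
    (t : ℝ) (ht : 0 ≤ t) (ht₁ : t ≤ T / 2) :
    u₂ t - s₂ t ≤ ((u₂ 0 - s₂ 0) / s₂ 0) * s₂ t *
      (1 + 2 ^ α * C₀ * s₂ 0 ^ (2 * α) * t) ^ (-((1 - μ) / 2 ^ (α + 2))) :=
  spread_in_slowdown_first_general lam α hlam hα p hp L C₀ hL hC₀ T μ hμ s₁ s₂ u₁ u₂ hs₂ hu₂ hpos
    horder₁ hΔpos hΔctrl hinit t ht ht₁
end

section
/- Under the standing comparison assumptions for two solutions of the slow-down system on [0,T] with T₁ = T/2, writing Δs(t) = (Δs₁(t), Δs₂(t)) ∈ ℝ² and ‖·‖ for the Euclidean norm, one has ‖Δs(T)‖ ≤ √(1+μ²) · (s₁(T)/s₂(0)) · ‖Δs(0)‖. -/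
/-- Monotonicity from a nonpositive derivative given by `HasDerivAt`. -/
private lemma anti_of_hasDerivAt_nonpos {f d : ℝ → ℝ} {a b : ℝ} (hab : a ≤ b)
    (hf : ∀ t ∈ Set.Icc a b, HasDerivAt f (d t) t)
    (hd : ∀ t ∈ Set.Icc a b, d t ≤ 0) : f b ≤ f a := by
  have h1 : ContinuousOn f (Set.Icc a b) := fun t ht =>
    (hf t ht).continuousAt.continuousWithinAt
  have h2 : AntitoneOn f (Set.Icc a b) := by
    apply antitoneOn_of_deriv_nonpos (convex_Icc a b) h1
    · intro x hx
      rw [interior_Icc] at hx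
      exact (hf x (Set.Ioo_subset_Icc_self hx)).differentiableAt.differentiableWithinAt
    · intro x hx
      rw [interior_Icc] at hx
      rw [(hf x (Set.Ioo_subset_Icc_self hx)).deriv]
      exact hd x (Set.Ioo_subset_Icc_self hx)
  exact h2 (Set.left_mem_Icc.2 hab) (Set.right_mem_Icc.2 hab) hab

/-- Tangent-line inequality for the concave function `x ↦ x ^ α`, `0 < α < 1`. -/
private lemma rpow_tangent {α y x : ℝ} (hα0 : 0 < α) (hα1 : α < 1)
    (hy : 0 < y) (hxy : y ≤ x) : x ^ α - y ^ α ≤ α * y ^ (α - 1) * (x - y) := by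
  rcases eq_or_lt_of_le hxy with h | h
  · simp [h]
  · have hderiv : ∀ z ∈ Set.Ioo y x, HasDerivAt (fun z : ℝ => z ^ α) (α * z ^ (α - 1)) z := by
      intro z hz
      exact Real.hasDerivAt_rpow_const (Or.inl (ne_of_gt (lt_trans hy hz.1)))
    have hcont : ContinuousOn (fun z : ℝ => z ^ α) (Set.Icc y x) := by
      intro z hz
      exact (Real.hasDerivAt_rpow_const (p := α)
        (Or.inl (ne_of_gt (lt_of_lt_of_le hy hz.1)))).continuousAt.continuousWithinAt
    obtain ⟨c, hc, hceq⟩ := exists_hasDerivAt_eq_slope (fun z : ℝ => z ^ α)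
      (fun z => α * z ^ (α - 1)) h hcont hderiv
    have hcy : (c : ℝ) ^ (α - 1) ≤ y ^ (α - 1) :=
      Real.rpow_le_rpow_of_nonpos hy hc.1.le (by linarith)
    have hxy' : (0:ℝ) < x - y := by linarith
    have : (x ^ α - y ^ α) / (x - y) ≤ α * y ^ (α - 1) := by
      rw [← hceq]
      have : α * c ^ (α - 1) ≤ α * y ^ (α - 1) :=
        mul_le_mul_of_nonneg_left hcy hα0.le
      exact this
    calc x ^ α - y ^ α = (x ^ α - y ^ α) / (x - y) * (x - y) := by
          field_simp
      _ ≤ α * y ^ (α - 1) * (x - y) := mul_le_mul_of_nonneg_right this hxy'.le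
/-- First phase: `Rₛ ≤ Rᵤ` when `a1 ≤ a2`. -/
private lemma phase1_R_le {μ a1 a2 b1 b2 : ℝ} (hμ0 : 0 < μ) (hμ1 : μ < 1)
    (ha1 : 0 < a1) (hb1 : 0 < b1)
    (hord : a1 ≤ a2) (hΔ : 0 < b2 - a2) (hctrl : |b1 - a1| ≤ μ * (b2 - a2)) :
    a1 ^ 2 + a2 ^ 2 ≤ b1 ^ 2 + b2 ^ 2 := by
  obtain ⟨h1, h2⟩ := abs_le.1 hctrl
  have hb1le : b1 ≤ b2 := by nlinarith
  have hA : μ * (b2 - a2) * (b1 + a1) ≤ μ * (b2 - a2) * (b2 + a2) := by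
    apply mul_le_mul_of_nonneg_left (by linarith) (mul_nonneg hμ0.le hΔ.le)
  have hB : (0:ℝ) ≤ (1 - μ) * ((b2 - a2) * (b2 + a2)) :=
    mul_nonneg (by linarith) (mul_nonneg hΔ.le (by linarith))
  nlinarith [mul_le_mul_of_nonneg_right h1 (by positivity : (0:ℝ) ≤ b1 + a1), hA, hB]

set_option maxHeartbeats 1000000 in
/-- Second phase pointwise bracket inequality. -/
private lemma phase2_bracket {α μ a1 a2 b1 b2 : ℝ} (hα0 : 0 < α) (hα1 : α < 1)
    (hμ0 : 0 < μ) (hμ1 : μ < 1)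
    (ha1 : 0 < a1) (ha2 : 0 < a2) (hb1 : 0 < b1) (hb2 : 0 < b2)
    (hΔ : 0 < b2 - a2) (hctrl : |b1 - a1| ≤ μ * (b2 - a2)) :
    0 ≤ b2 * ((b1 ^ 2 + b2 ^ 2) ^ α - (a1 ^ 2 + a2 ^ 2) ^ α)
        + 2 * (b2 - a2) * (a1 ^ 2 + a2 ^ 2) ^ α := by
  obtain ⟨h1, h2⟩ := abs_le.1 hctrl
  set Ru := b1 ^ 2 + b2 ^ 2 with hRu_def
  set Rs := a1 ^ 2 + a2 ^ 2 with hRs_def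
  have hRu : 0 < Ru := by positivity
  have hRs : 0 < Rs := by positivity
  have hRsP : 0 < Rs ^ α := Real.rpow_pos_of_pos hRs α
  have hRuP : 0 < Ru ^ α := Real.rpow_pos_of_pos hRu α
  rcases le_or_gt Rs Ru with h | h
  · have hmono : Rs ^ α ≤ Ru ^ α := Real.rpow_le_rpow hRs.le h hα0.le
    nlinarith
  · -- Ru < Rs
    have hmono : Ru ^ α ≤ Rs ^ α := Real.rpow_le_rpow hRu.le h.le hα0.le
    have tang : Rs ^ α - Ru ^ α ≤ α * Ru ^ (α - 1) * (Rs - Ru) :=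
      rpow_tangent hα0 hα1 hRu h.le
    have hW : 0 < Ru ^ (α - 1) := Real.rpow_pos_of_pos hRu _
    have hWRu : Ru ^ (α - 1) * Ru = Ru ^ α := by
      rw [← Real.rpow_add_one hRu.ne' (α - 1)]
      norm_num
    have key1 : Rs - Ru ≤ μ * (b2 - a2) * (b1 + a1) := by
      nlinarith [mul_le_mul_of_nonneg_right h1 (by positivity : (0:ℝ) ≤ b1 + a1),
        mul_pos hΔ (by positivity : (0:ℝ) < b2 + a2)]
    have hbd : b2 * (b1 + a1) ≤ (1 + μ) * Ru := by
      nlinarith [sq_nonneg (b1 - b2), mul_le_mul_of_nonneg_left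
        (by linarith : a1 ≤ b1 + μ * (b2 - a2)) hb2.le,
        mul_pos hμ0 (mul_pos hb2 ha2)]
    have chain : b2 * (Rs ^ α - Ru ^ α) ≤ 2 * (b2 - a2) * Rs ^ α := by
      calc b2 * (Rs ^ α - Ru ^ α)
          ≤ b2 * (α * Ru ^ (α - 1) * (Rs - Ru)) :=
            mul_le_mul_of_nonneg_left tang hb2.le
        _ ≤ b2 * (α * Ru ^ (α - 1) * (μ * (b2 - a2) * (b1 + a1))) :=
            mul_le_mul_of_nonneg_left
              (mul_le_mul_of_nonneg_left key1 (by positivity)) hb2.le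
        _ = α * μ * (b2 - a2) * Ru ^ (α - 1) * (b2 * (b1 + a1)) := by ring
        _ ≤ α * μ * (b2 - a2) * Ru ^ (α - 1) * ((1 + μ) * Ru) :=
            mul_le_mul_of_nonneg_left hbd (by positivity)
        _ = α * μ * (1 + μ) * (b2 - a2) * Ru ^ α := by rw [← hWRu]; ring
        _ ≤ 2 * (b2 - a2) * Ru ^ α := by
            have hαμ : α * μ ≤ 1 := by nlinarith [mul_lt_mul_of_pos_right hα1 hμ0]
            have h5 : α * μ * (1 + μ) ≤ 2 := by
              nlinarith [mul_le_mul_of_nonneg_right hαμ (by linarith : (0:ℝ) ≤ 1 + μ)]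
            nlinarith [mul_le_mul_of_nonneg_right h5 (mul_nonneg hΔ.le hRuP.le)]
        _ ≤ 2 * (b2 - a2) * Rs ^ α := by
            apply mul_le_mul_of_nonneg_left hmono (by linarith)
    linarith [chain]

set_option maxHeartbeats 1000000 in
/-- Lemma "spread-in-slowdown", final estimate: under the standing comparison
assumptions for two solutions `s = (s₁,s₂)` and `s̃ = (u₁,u₂)` of the slow-down
system on `[0,T]` with `T₁ = T/2`, writing `Δs(t) = (Δs₁(t), Δs₂(t))` and using
the Euclidean norm, `‖Δs(T)‖ ≤ √(1+μ²) (s₁(T)/s₂(0)) ‖Δs(0)‖`. -/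
theorem spread_in_slowdown_norm
    (lam α : ℝ) (hlam : 1 < lam) (hα : α ∈ Set.Ioo (0 : ℝ) 1)
    (p : ℤ) (hp : 3 ≤ p)
    (L C₀ : ℝ)
    (hL : L = Real.log lam * ((p : ℝ) / 2) ^ (2 * α))
    (hC₀ : C₀ = 2 * α * L)
    (T μ : ℝ) (hT : 0 < T) (hμ : μ ∈ Set.Ioo (0 : ℝ) 1)
    (s₁ s₂ u₁ u₂ : ℝ → ℝ)
    (hs₁ : ∀ t ∈ Set.Icc (0 : ℝ) T,
      HasDerivAt s₁ (L * s₁ t * (s₁ t ^ 2 + s₂ t ^ 2) ^ α) t)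
    (hs₂ : ∀ t ∈ Set.Icc (0 : ℝ) T,
      HasDerivAt s₂ (-(L * s₂ t * (s₁ t ^ 2 + s₂ t ^ 2) ^ α)) t)
    (hu₁ : ∀ t ∈ Set.Icc (0 : ℝ) T,
      HasDerivAt u₁ (L * u₁ t * (u₁ t ^ 2 + u₂ t ^ 2) ^ α) t)
    (hu₂ : ∀ t ∈ Set.Icc (0 : ℝ) T,
      HasDerivAt u₂ (-(L * u₂ t * (u₁ t ^ 2 + u₂ t ^ 2) ^ α)) t)
    (hpos : ∀ t ∈ Set.Icc (0 : ℝ) T,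
      0 < s₁ t ∧ 0 < s₂ t ∧ 0 < u₁ t ∧ 0 < u₂ t)
    (horder₁ : ∀ t ∈ Set.Icc (0 : ℝ) (T / 2), s₁ t ≤ s₂ t)
    (horder₂ : ∀ t ∈ Set.Icc (T / 2) T, s₂ t ≤ s₁ t)
    (hΔpos : ∀ t ∈ Set.Icc (0 : ℝ) T, 0 < u₂ t - s₂ t)
    (hΔctrl : ∀ t ∈ Set.Icc (0 : ℝ) T, |u₁ t - s₁ t| ≤ μ * (u₂ t - s₂ t))
    (hinit : (u₂ 0 - s₂ 0) / s₂ 0 ≤ (1 - μ) / 72)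
    :
    Real.sqrt ((u₁ T - s₁ T) ^ 2 + (u₂ T - s₂ T) ^ 2) ≤
      Real.sqrt (1 + μ ^ 2) * (s₁ T / s₂ 0) *
        Real.sqrt ((u₁ 0 - s₁ 0) ^ 2 + (u₂ 0 - s₂ 0) ^ 2) := by
  obtain ⟨hα0, hα1⟩ := hα
  obtain ⟨hμ0, hμ1⟩ := hμ
  -- L is nonnegative
  have hp3 : (3 : ℝ) ≤ (p : ℝ) := by exact_mod_cast hp
  have hL0 : 0 ≤ L := by
    rw [hL]
    exact (mul_pos (Real.log_pos hlam)
      (Real.rpow_pos_of_pos (by linarith) (2 * α))).le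
  -- interval inclusions
  have hsub1 : Set.Icc (0 : ℝ) (T / 2) ⊆ Set.Icc (0 : ℝ) T := by
    apply Set.Icc_subset_Icc le_rfl; linarith
  have hsub2 : Set.Icc (T / 2) T ⊆ Set.Icc (0 : ℝ) T := by
    apply Set.Icc_subset_Icc (by linarith) le_rfl
  have h0mem : (0 : ℝ) ∈ Set.Icc (0 : ℝ) T := ⟨le_rfl, hT.le⟩
  have hT2mem : T / 2 ∈ Set.Icc (0 : ℝ) T := ⟨by linarith, by linarith⟩
  have hTmem : T ∈ Set.Icc (0 : ℝ) T := ⟨hT.le, le_rfl⟩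
  have hseq : s₁ (T / 2) = s₂ (T / 2) :=
    le_antisymm (horder₁ (T / 2) ⟨by linarith, le_rfl⟩)
      (horder₂ (T / 2) ⟨le_rfl, by linarith⟩)
  -- Phase 1 : ψ = (u₂ - s₂)/s₂ is decreasing on [0, T/2]
  have phase1 : (u₂ (T / 2) - s₂ (T / 2)) / s₂ (T / 2) ≤ (u₂ 0 - s₂ 0) / s₂ 0 := by
    apply anti_of_hasDerivAt_nonpos (f := fun t => (u₂ t - s₂ t) / s₂ t)
      (d := fun t =>
        ((-(L * u₂ t * (u₁ t ^ 2 + u₂ t ^ 2) ^ α) -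
            -(L * s₂ t * (s₁ t ^ 2 + s₂ t ^ 2) ^ α)) * s₂ t -
          (u₂ t - s₂ t) * -(L * s₂ t * (s₁ t ^ 2 + s₂ t ^ 2) ^ α)) / s₂ t ^ 2)
      (by linarith)
    · intro t ht
      have ht' := hsub1 ht
      exact ((hu₂ t ht').sub (hs₂ t ht')).div (hs₂ t ht') (hpos t ht').2.1.ne'
    · intro t ht
      have ht' := hsub1 ht
      obtain ⟨h1p, h2p, h3p, h4p⟩ := hpos t ht'
      have hR : s₁ t ^ 2 + s₂ t ^ 2 ≤ u₁ t ^ 2 + u₂ t ^ 2 :=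
        phase1_R_le hμ0 hμ1 h1p h3p (horder₁ t ht) (hΔpos t ht') (hΔctrl t ht')
      have hmono : (s₁ t ^ 2 + s₂ t ^ 2) ^ α ≤ (u₁ t ^ 2 + u₂ t ^ 2) ^ α :=
        Real.rpow_le_rpow (by positivity) hR hα0.le
      apply div_nonpos_iff.mpr
      right
      refine ⟨?_, sq_nonneg _⟩
      nlinarith [mul_nonneg (mul_nonneg hL0 h2p.le) h4p.le, sub_nonpos.2 hmono]
  -- Phase 2 : φ = (u₂ - s₂)/s₁ is decreasing on [T/2, T]
  have phase2 : (u₂ T - s₂ T) / s₁ T ≤ (u₂ (T / 2) - s₂ (T / 2)) / s₁ (T / 2) := by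
    apply anti_of_hasDerivAt_nonpos (f := fun t => (u₂ t - s₂ t) / s₁ t)
      (d := fun t =>
        ((-(L * u₂ t * (u₁ t ^ 2 + u₂ t ^ 2) ^ α) -
            -(L * s₂ t * (s₁ t ^ 2 + s₂ t ^ 2) ^ α)) * s₁ t -
          (u₂ t - s₂ t) * (L * s₁ t * (s₁ t ^ 2 + s₂ t ^ 2) ^ α)) / s₁ t ^ 2)
      (by linarith)
    · intro t ht
      have ht' := hsub2 ht
      exact ((hu₂ t ht').sub (hs₂ t ht')).div (hs₁ t ht') (hpos t ht').1.ne'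
    · intro t ht
      have ht' := hsub2 ht
      obtain ⟨h1p, h2p, h3p, h4p⟩ := hpos t ht'
      have hB := phase2_bracket hα0 hα1 hμ0 hμ1 h1p h2p h3p h4p
        (hΔpos t ht') (hΔctrl t ht')
      apply div_nonpos_iff.mpr
      right
      refine ⟨?_, sq_nonneg _⟩
      nlinarith [mul_nonneg (mul_nonneg hL0 h1p.le) hB]
  -- combine the two phases
  have hratio : (u₂ T - s₂ T) / s₁ T ≤ (u₂ 0 - s₂ 0) / s₂ 0 := by
    rw [hseq] at phase2
    linarith
  obtain ⟨hs₁T, hs₂T, hu₁T, hu₂T⟩ := hpos T hTmem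
  obtain ⟨hs₁0, hs₂0, hu₁0, hu₂0⟩ := hpos 0 h0mem
  have hA : 0 < s₁ T / s₂ 0 := div_pos hs₁T hs₂0
  have hkey : u₂ T - s₂ T ≤ s₁ T / s₂ 0 * (u₂ 0 - s₂ 0) := by
    rw [div_le_div_iff₀ hs₁T hs₂0] at hratio
    rw [div_mul_eq_mul_div, le_div_iff₀ hs₂0]
    linarith
  -- final norm computation
  have hxT := abs_le.1 (hΔctrl T hTmem)
  have hyT := hΔpos T hTmem
  have hy0 := hΔpos 0 h0mem
  have h1 : (u₁ T - s₁ T) ^ 2 ≤ μ ^ 2 * (u₂ T - s₂ T) ^ 2 := by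
    nlinarith [hxT.1, hxT.2]
  have h2 : (u₂ T - s₂ T) ^ 2 ≤ (s₁ T / s₂ 0) ^ 2 * (u₂ 0 - s₂ 0) ^ 2 := by
    nlinarith [hkey, hyT, mul_pos hA hy0]
  have e1 : Real.sqrt ((1 + μ ^ 2) * ((s₁ T / s₂ 0) ^ 2 *
      ((u₁ 0 - s₁ 0) ^ 2 + (u₂ 0 - s₂ 0) ^ 2))) =
      Real.sqrt (1 + μ ^ 2) * (s₁ T / s₂ 0) *
        Real.sqrt ((u₁ 0 - s₁ 0) ^ 2 + (u₂ 0 - s₂ 0) ^ 2) := by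
    rw [Real.sqrt_mul (by positivity : (0:ℝ) ≤ 1 + μ ^ 2),
      Real.sqrt_mul (sq_nonneg _), Real.sqrt_sq hA.le, mul_assoc]
  rw [← e1]
  apply Real.sqrt_le_sqrt
  have h3 : μ ^ 2 * (u₂ T - s₂ T) ^ 2 ≤
      μ ^ 2 * ((s₁ T / s₂ 0) ^ 2 * (u₂ 0 - s₂ 0) ^ 2) :=
    mul_le_mul_of_nonneg_left h2 (sq_nonneg μ)
  have h4 : (0:ℝ) ≤ (s₁ T / s₂ 0) ^ 2 * (u₁ 0 - s₁ 0) ^ 2 := by positivity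
  have h5 : (0:ℝ) ≤ μ ^ 2 * ((s₁ T / s₂ 0) ^ 2 * (u₁ 0 - s₁ 0) ^ 2) := by positivity
  nlinarith [h1, h2, h3, h4, h5]
end

section
/- Fix a real α ∈ (0,1) and an integer p ≥ 3. Define H : ℂ → ℝ by H(0) = 0 and H(z) = |z|^{2/(1−α) − p} · Im(z^p) for z ≠ 0. Then for every natural number k with k < 2/(1−α), the function H is k-times continuously differentiable on all of ℂ (regarded as ℝ²). In particular, since 2/(1−α) > 2, H is C². -/
/-!
`H` is positively homogeneous of degree `β = 2/(1-α)` and smooth away from the origin.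
A function of degree `d > 0` that is continuous off `0` is bounded by `M‖x‖^d`, by compactness
of the unit sphere; so it is continuous at `0`, and differentiable there with derivative `0` when
`d > 1`. Its derivative is then homogeneous of degree `d - 1` and again smooth off `0`, so
induction on `k` gives `C^k` for every `k < d`.
-/

open Filter Topology
open scoped ContDiff

universe u

section Homogeneous

variable {E F : Type*} [NormedAddCommGroup E] [NormedAddCommGroup F] {d M : ℝ} {f : E → F}

lemma tendsto_norm_rpow_nhds_zero (hd : 0 < d) : Tendsto (fun x : E => ‖x‖ ^ d) (𝓝 0) (𝓝 0) := by
  simpa [Function.comp_def, Real.zero_rpow hd.ne'] using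
    (Real.continuousAt_rpow_const 0 d (Or.inr hd.le)).tendsto.comp (tendsto_norm_zero (E := E))

lemma tendsto_nhds_zero_of_norm_le_rpow (hd : 0 < d) (hM : ∀ x, ‖f x‖ ≤ M * ‖x‖ ^ d) :
    Tendsto f (𝓝 0) (𝓝 0) :=
  squeeze_zero_norm hM (by simpa using (tendsto_norm_rpow_nhds_zero hd).const_mul M)

variable [NormedSpace ℝ E] [NormedSpace ℝ F]

lemma hasFDerivAt_zero_of_norm_le_rpow (hd : 1 < d) (hM : ∀ x, ‖f x‖ ≤ M * ‖x‖ ^ d) :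
    HasFDerivAt f (0 : E →L[ℝ] F) 0 := by
  have hf0 : f 0 = 0 := by
    simpa [Real.zero_rpow (by linarith : d ≠ 0)] using hM 0
  have hbound : ∀ x : E, ‖x - 0‖⁻¹ * ‖f x - f 0 - (0 : E →L[ℝ] F) (x - 0)‖ ≤ M * ‖x‖ ^ (d - 1) := by
    intro x
    rcases eq_or_ne x 0 with rfl | hx
    · simp [hf0, Real.zero_rpow (by linarith : d - 1 ≠ 0)]
    have hx' : 0 < ‖x‖ := norm_pos_iff.2 hx
    rw [sub_zero, hf0, sub_zero, zero_apply, sub_zero, inv_mul_le_iff₀ hx',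
      Real.rpow_sub_one hx'.ne', mul_div_assoc', mul_div_cancel₀ _ hx'.ne']
    exact hM x
  rw [hasFDerivAt_iff_tendsto]
  refine squeeze_zero (fun _ => by positivity) hbound ?_
  simpa using (tendsto_norm_rpow_nhds_zero (E := E) (by linarith : 0 < d - 1)).const_mul M

def IsPosHomogeneous (d : ℝ) (f : E → F) : Prop :=
  ∀ t : ℝ, 0 < t → ∀ x, f (t • x) = t ^ d • f x

namespace IsPosHomogeneous

lemma map_zero (hf : IsPosHomogeneous d f) (hd : 0 < d) : f 0 = 0 := by
  have h2 : f 0 = (2 : ℝ) ^ d • f 0 := by simpa using hf 2 two_pos 0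
  have hne : (2 : ℝ) ^ d - 1 ≠ 0 := (sub_pos.2 (Real.one_lt_rpow one_lt_two hd)).ne'
  have : ((2 : ℝ) ^ d - 1) • f 0 = 0 := by rw [sub_smul, ← h2, one_smul, sub_self]
  exact (smul_eq_zero.1 this).resolve_left hne

lemma exists_norm_le [ProperSpace E] (hf : IsPosHomogeneous d f) (hd : 0 < d)
    (hc : ContinuousOn f {0}ᶜ) : ∃ M, ∀ x, ‖f x‖ ≤ M * ‖x‖ ^ d := by
  have hsphere : Metric.sphere (0 : E) 1 ⊆ {0}ᶜ := fun x hx =>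
    ne_zero_of_norm_ne_zero (by simp_all)
  obtain ⟨M, hM⟩ := (isCompact_sphere (0 : E) 1).exists_bound_of_continuousOn (hc.mono hsphere)
  refine ⟨M, fun x => ?_⟩
  rcases eq_or_ne x 0 with rfl | hx
  · simp [hf.map_zero hd, Real.zero_rpow hd.ne']
  have hx' : 0 < ‖x‖ := norm_pos_iff.2 hx
  have hu : ‖x‖⁻¹ • x ∈ Metric.sphere (0 : E) 1 := by
    simp [norm_smul, hx'.ne']
  calc ‖f x‖ = ‖f (‖x‖ • ‖x‖⁻¹ • x)‖ := by rw [smul_inv_smul₀ hx'.ne']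
    _ = ‖x‖ ^ d * ‖f (‖x‖⁻¹ • x)‖ := by
      rw [hf _ hx', norm_smul, Real.norm_of_nonneg (Real.rpow_nonneg hx'.le d)]
    _ ≤ ‖x‖ ^ d * M := by gcongr; exact hM _ hu
    _ = M * ‖x‖ ^ d := mul_comm _ _

lemma continuous [ProperSpace E] (hf : IsPosHomogeneous d f) (hd : 0 < d)
    (hc : ContinuousOn f {0}ᶜ) : Continuous f := by
  obtain ⟨M, hM⟩ := hf.exists_norm_le hd hc
  refine continuous_iff_continuousAt.2 fun x => ?_
  rcases eq_or_ne x 0 with rfl | hx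
  · simpa [ContinuousAt, hf.map_zero hd] using tendsto_nhds_zero_of_norm_le_rpow hd hM
  · exact hc.continuousAt (isOpen_compl_singleton.mem_nhds hx)

lemma differentiable [ProperSpace E] (hf : IsPosHomogeneous d f) (hd : 1 < d)
    (hdiff : DifferentiableOn ℝ f {0}ᶜ) : Differentiable ℝ f := by
  obtain ⟨M, hM⟩ := hf.exists_norm_le (by linarith) hdiff.continuousOn
  intro x
  rcases eq_or_ne x 0 with rfl | hx
  · exact (hasFDerivAt_zero_of_norm_le_rpow hd hM).differentiableAt
  · exact hdiff.differentiableAt (isOpen_compl_singleton.mem_nhds hx)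

lemma fderiv (hf : IsPosHomogeneous d f) (hdiff : Differentiable ℝ f) :
    IsPosHomogeneous (d - 1) (_root_.fderiv ℝ f) := by
  intro t ht x
  have hscaled : HasFDerivAt (fun y => f (t • y)) (t • _root_.fderiv ℝ f (t • x)) x := by
    simpa [Function.comp_def] using
      (hdiff (t • x)).hasFDerivAt.comp x ((hasFDerivAt_id x).const_smul t)
  have hhom : HasFDerivAt (fun y => f (t • y)) (t ^ d • _root_.fderiv ℝ f x) x := by
    rw [show (fun y => f (t • y)) = t ^ d • f from funext (hf t ht)]
    exact (hdiff x).hasFDerivAt.const_smul (t ^ d)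
  rw [Real.rpow_sub_one ht.ne', div_eq_inv_mul, mul_smul, ← hscaled.unique hhom,
    inv_smul_smul₀ ht.ne']

end IsPosHomogeneous

end Homogeneous

-- `E` and `F` share a universe so that the induction can pass from `F` to `E →L[ℝ] F`.
theorem IsPosHomogeneous.contDiff {E F : Type u} [NormedAddCommGroup E] [NormedSpace ℝ E]
    [ProperSpace E] [NormedAddCommGroup F] [NormedSpace ℝ F] {d : ℝ} {f : E → F} {k : ℕ}
    (hf : IsPosHomogeneous d f) (hsmooth : ContDiffOn ℝ ∞ f {0}ᶜ) (hk : (k : ℝ) < d) :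
    ContDiff ℝ k f := by
  induction k generalizing F d f with
  | zero => exact contDiff_zero.2 (hf.continuous (mod_cast hk) hsmooth.continuousOn)
  | succ k ih =>
    push_cast at hk
    have hdiff : Differentiable ℝ f :=
      hf.differentiable (by linarith [k.cast_nonneg (α := ℝ)]) (hsmooth.differentiableOn (by simp))
    rw [Nat.cast_succ, contDiff_succ_iff_fderiv]
    exact ⟨hdiff, by simp, ih (hf.fderiv hdiff)
      (hsmooth.fderiv_of_isOpen isOpen_compl_singleton (by simp)) (by linarith)⟩

lemma Complex.isPosHomogeneous_norm_rpow_mul_im_zpow (r : ℝ) (p : ℤ) :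
    IsPosHomogeneous (r + p) (fun z : ℂ => ‖z‖ ^ r * (z ^ p).im) := by
  intro t ht z
  have hzpow : ((t • z) ^ p).im = t ^ (p : ℝ) * (z ^ p).im := by
    rw [Complex.real_smul, mul_zpow, ← Complex.ofReal_zpow, Complex.im_ofReal_mul,
      Real.rpow_intCast]
  dsimp only
  rw [hzpow, norm_smul, Real.norm_of_nonneg ht.le, Real.mul_rpow ht.le (norm_nonneg z),
    Real.rpow_add ht, smul_eq_mul]
  ring

lemma Complex.contDiffOn_norm_rpow_mul_im_zpow (r : ℝ) (p : ℤ) :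
    ContDiffOn ℝ ∞ (fun z : ℂ => ‖z‖ ^ r * (z ^ p).im) {0}ᶜ := fun z hz =>
  (((contDiffAt_norm ℝ hz).rpow_const_of_ne (norm_ne_zero_iff.2 hz)).mul
    (Complex.imCLM.contDiff.contDiffAt.comp z
      (((analyticAt_id (𝕜 := ℂ)).zpow hz).contDiffAt.restrict_scalars ℝ))).contDiffWithinAt

theorem hamiltonian_regularity_general
    (α : ℝ) (hα : α ∈ Set.Ioo (0 : ℝ) 1)
    (p : ℤ)
    (H : ℂ → ℝ)
    (hH0 : H 0 = 0)
    (hH : ∀ z : ℂ, z ≠ 0 →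
      H z = ‖z‖ ^ (2 / (1 - α) - (p : ℝ)) * (z ^ p).im) :
    (∀ k : ℕ, (k : ℝ) < 2 / (1 - α) → ContDiff ℝ k H) ∧ ContDiff ℝ 2 H := by
  obtain ⟨hα0, hα1⟩ := hα
  have hH_eq : H = fun z => ‖z‖ ^ (2 / (1 - α) - (p : ℝ)) * (z ^ p).im := by
    funext z
    rcases eq_or_ne z 0 with rfl | hz
    · simp [hH0, zero_zpow_eq, apply_ite]
    · exact hH z hz
  have hhom : IsPosHomogeneous (2 / (1 - α)) H := by
    simpa [hH_eq] using Complex.isPosHomogeneous_norm_rpow_mul_im_zpow (2 / (1 - α) - p) p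
  have hCk : ∀ k : ℕ, (k : ℝ) < 2 / (1 - α) → ContDiff ℝ k H := fun k hk =>
    hhom.contDiff (hH_eq ▸ Complex.contDiffOn_norm_rpow_mul_im_zpow _ p) hk
  refine ⟨hCk, mod_cast hCk 2 ?_⟩
  rw [Nat.cast_ofNat, lt_div_iff₀ (by linarith)]
  linarith

/-- Regularity of the slowed-down Hamiltonian: for `α ∈ (0,1)` and `p ≥ 3`,
the function `H(z) = |z|^{2/(1-α) - p} Im(z^p)` (with `H(0) = 0`) is `C^k`
on all of `ℂ ≅ ℝ²` for every natural `k < 2/(1-α)`; in particular it is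
`C²` since `2/(1-α) > 2`. -/
theorem hamiltonian_regularity
    (α : ℝ) (hα : α ∈ Set.Ioo (0 : ℝ) 1)
    (p : ℤ) (hp : 3 ≤ p)
    (H : ℂ → ℝ)
    (hH0 : H 0 = 0)
    (hH : ∀ z : ℂ, z ≠ 0 →
      H z = ‖z‖ ^ (2 / (1 - α) - (p : ℝ)) * (z ^ p).im) :
    (∀ k : ℕ, (k : ℝ) < 2 / (1 - α) → ContDiff ℝ k H) ∧ ContDiff ℝ 2 H :=
  hamiltonian_regularity_general α hα p H hH0 hH
end
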